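/- arXiv:1912.12340 — 4 statements merged into one kernel-verified Lean document; each statement's English description precedes it below -/
import Mathlib

section
/- Assume pq = 1. Then V 𝓛 V⁻¹ = −(1/2)√(pq) Σ_{j=1}^{L−1} [ σˣ_j σˣ_{j+1} + σʸ_j σʸ_{j+1} + ((τ+τ⁻¹)/2) σᶻ_j σᶻ_{j+1} − ((τ+τ⁻¹)/2)·I ] − A₁⁺ σˣ₁ − i A₁⁻ σʸ₁ − B₁ σᶻ₁ − A_L⁺ σˣ_L − i A_L⁻ σʸ_L − B_L σᶻ_L + (1/2)(α+β+γ+δ)·I, where A₁^± := (1/2)(γτ ± ατ⁻¹), B₁ := (1/2)(γ−α) + (1/4)(τ−τ⁻¹), A_L^± := (1/2)(βτ^L ± δτ^{−L}), and B_L := (1/2)(β−δ) − (1/4)(τ−τ⁻¹). -/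
open Matrix Complex

noncomputable section

/-- A particle configuration on `L` sites: each site is a hole (`0`) or a particle (`1`). -/
abbrev Conf (L : ℕ) := Fin L → Fin 2

/-- The 2×2 matrix `A` acting on the `j`-th tensor factor (0-based index) of `(ℂ²)^{⊗L}`
and the identity elsewhere.  (For `j ≥ L` this is the identity.) -/
def site (L : ℕ) (A : Matrix (Fin 2) (Fin 2) ℂ) (j : ℕ) :
    Matrix (Conf L) (Conf L) ℂ :=
  Matrix.of fun η' η =>
    if h : j < L then
      A (η' ⟨j, h⟩) (η ⟨j, h⟩) *
        ∏ k ∈ Finset.univ.erase (⟨j, h⟩ : Fin L), (if η' k = η k then (1 : ℂ) else 0)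
    else (if η' = η then (1 : ℂ) else 0)

def sigmaPlus : Matrix (Fin 2) (Fin 2) ℂ := !![0, 1; 0, 0]
def sigmaMinus : Matrix (Fin 2) (Fin 2) ℂ := !![0, 0; 1, 0]
def numOp : Matrix (Fin 2) (Fin 2) ℂ := !![0, 0; 0, 1]
def sigmaX : Matrix (Fin 2) (Fin 2) ℂ := !![0, 1; 1, 0]
def sigmaY : Matrix (Fin 2) (Fin 2) ℂ := !![0, -Complex.I; Complex.I, 0]
def sigmaZ : Matrix (Fin 2) (Fin 2) ℂ := !![1, 0; 0, -1]

/-- The open ASEP generator `𝓛` on `L` sites with bulk rates `p` (right), `q` (left),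
left-boundary entry/exit rates `α, γ` and right-boundary entry/exit rates `δ, β`.
Lattice sites are 0-based, so site `1` of the paper is index `0` and site `L` is `L-1`. -/
def asepGen (L : ℕ) (p q α β γ δ : ℝ) : Matrix (Conf L) (Conf L) ℂ :=
  (-((Real.sqrt (p * q) : ℝ) : ℂ)) •
    (∑ j ∈ Finset.range (L - 1),
      (((Real.sqrt (p / q) : ℝ) : ℂ)⁻¹ •
          (site L sigmaMinus j * site L sigmaPlus (j + 1)
            - site L (1 - numOp) j * site L numOp (j + 1))
        + ((Real.sqrt (p / q) : ℝ) : ℂ) •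
          (site L sigmaMinus (j + 1) * site L sigmaPlus j
            - site L numOp j * site L (1 - numOp) (j + 1))))
  - (α : ℂ) • (site L sigmaMinus 0 - 1 + site L numOp 0)
  - (γ : ℂ) • (site L sigmaPlus 0 - site L numOp 0)
  - (δ : ℂ) • (site L sigmaMinus (L - 1) - 1 + site L numOp (L - 1))
  - (β : ℂ) • (site L sigmaPlus (L - 1) - site L numOp (L - 1))

/-- The diagonal matrix `V` acting on a configuration basis vector `e_η` by
`τ^{-Σ_j j η_j}` (with 1-based site labels as in the paper). -/
def Vmat (L : ℕ) (τ : ℂ) : Matrix (Conf L) (Conf L) ℂ :=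
  Matrix.diagonal fun η : Conf L =>
    τ ^ (-(∑ j : Fin L, (((j : ℕ) : ℤ) + 1) * ((η j : ℕ) : ℤ)))

/-!
Conjugation by `V = ⊗_j diag(1, τ^{-j})` rescales `σ⁻_j` by `τ^{-j}` and `σ⁺_j` by `τ^j` and
fixes `n_j`. In the hopping term `τ⁻¹ σ⁻_j σ⁺_{j+1}` this produces a factor `τ` that cancels the
`τ⁻¹`, and likewise for the reverse hop, so for `pq = 1` every bond becomes the symmetric hopping
`σ⁻_j σ⁺_{j+1} + σ⁺_j σ⁻_{j+1}` plus diagonal terms. With `σ^± = (σˣ ± iσʸ)/2` and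
`n = (1 - σᶻ)/2` a bond is the XXZ bond plus `(τ - τ⁻¹)/4 · (σᶻ_j - σᶻ_{j+1})`; these extra terms
telescope to the `±(τ - τ⁻¹)/4` in the boundary fields `B₁` and `B_L`.
-/

namespace Matrix

variable {ι n R : Type*} [Fintype ι] [CommSemiring R]

def kronPi (M : ι → Matrix n n R) : Matrix (ι → n) (ι → n) R :=
  of fun a b => ∏ i, M i (a i) (b i)

theorem kronPi_mul [DecidableEq ι] [Fintype n] (M N : ι → Matrix n n R) :
    kronPi M * kronPi N = kronPi (M * N) := by
  ext a b
  simp only [kronPi, mul_apply, of_apply, Pi.mul_apply, Finset.prod_univ_sum,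
    Fintype.piFinset_univ, Finset.prod_mul_distrib]

theorem kronPi_diagonal [DecidableEq n] (d : ι → n → R) :
    kronPi (fun i => diagonal (d i)) = diagonal fun a => ∏ i, d i (a i) := by
  ext a b
  rcases eq_or_ne a b with rfl | hab
  · simp [kronPi]
  · obtain ⟨i, hi⟩ := Function.ne_iff.mp hab
    rw [diagonal_apply_ne _ hab]
    exact Finset.prod_eq_zero (Finset.mem_univ i) (diagonal_apply_ne _ hi)

theorem kronPi_one [DecidableEq n] : kronPi (1 : ι → Matrix n n R) = 1 := by
  have h := kronPi_diagonal fun (_ : ι) (_ : n) => (1 : R)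
  simp only [diagonal_one, Finset.prod_const_one] at h
  exact h

end Matrix

section Sites

variable {L j k : ℕ}

theorem site_eq_kronPi (h : j < L) (A : Matrix (Fin 2) (Fin 2) ℂ) :
    site L A j = kronPi (Function.update 1 ⟨j, h⟩ A) := by
  ext η' η
  simp only [site, kronPi, of_apply, dif_pos h]
  rw [← Finset.mul_prod_erase _ _ (Finset.mem_univ (⟨j, h⟩ : Fin L)), Function.update_self]
  congr 1
  refine Finset.prod_congr rfl fun i hi => ?_
  rw [Function.update_of_ne (Finset.ne_of_mem_erase hi), Pi.one_apply, one_apply]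

theorem site_one (h : j < L) : site L 1 j = 1 := by
  rw [site_eq_kronPi h, Function.update_one, kronPi_one]

theorem site_add (h : j < L) (A B : Matrix (Fin 2) (Fin 2) ℂ) :
    site L (A + B) j = site L A j + site L B j := by
  ext η' η
  simp only [site, of_apply, dif_pos h, Matrix.add_apply, add_mul]

theorem site_sub (h : j < L) (A B : Matrix (Fin 2) (Fin 2) ℂ) :
    site L (A - B) j = site L A j - site L B j := by
  ext η' η
  simp only [site, of_apply, dif_pos h, Matrix.sub_apply, sub_mul]

theorem site_smul (h : j < L) (c : ℂ) (A : Matrix (Fin 2) (Fin 2) ℂ) :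
    site L (c • A) j = c • site L A j := by
  ext η' η
  simp only [site, of_apply, dif_pos h, Matrix.smul_apply, smul_eq_mul, mul_assoc]

theorem commute_site (hj : j < L) (hk : k < L) (hjk : j ≠ k) (A B : Matrix (Fin 2) (Fin 2) ℂ) :
    Commute (site L A j) (site L B k) := by
  have hne : (⟨j, hj⟩ : Fin L) ≠ ⟨k, hk⟩ := Fin.ne_of_val_ne hjk
  rw [Commute, SemiconjBy, site_eq_kronPi hj, site_eq_kronPi hk, kronPi_mul, kronPi_mul]
  congr 1
  funext i
  by_cases hi : i = ⟨j, hj⟩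
  · subst hi; simp [Function.update_of_ne hne]
  · by_cases hi' : i = ⟨k, hk⟩
    · subst hi'; simp [Function.update_of_ne hi]
    · simp [Function.update_of_ne hi, Function.update_of_ne hi']

theorem kronPi_mul_site_mul_kronPi {D E : Fin L → Matrix (Fin 2) (Fin 2) ℂ}
    (hDE : ∀ i, D i * E i = 1) (h : j < L) (A : Matrix (Fin 2) (Fin 2) ℂ) :
    kronPi D * site L A j * kronPi E = site L (D ⟨j, h⟩ * A * E ⟨j, h⟩) j := by
  rw [site_eq_kronPi h, kronPi_mul, kronPi_mul, site_eq_kronPi h]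
  congr 1
  funext i
  by_cases hi : i = ⟨j, h⟩
  · subst hi; simp
  · simp [Function.update_of_ne hi, hDE]

end Sites

def particleWeight (t : ℂ) : Matrix (Fin 2) (Fin 2) ℂ :=
  diagonal fun x => t ^ (x : ℕ)

theorem particleWeight_mul (s t : ℂ) :
    particleWeight s * particleWeight t = particleWeight (s * t) := by
  simp only [particleWeight, diagonal_mul_diagonal, mul_pow]

theorem particleWeight_mul_inv {t : ℂ} (ht : t ≠ 0) :
    particleWeight t * particleWeight t⁻¹ = 1 := by
  rw [particleWeight_mul, mul_inv_cancel₀ ht]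
  simp [particleWeight]

theorem particleWeight_conj_sigmaMinus (t : ℂ) :
    particleWeight t * sigmaMinus * particleWeight t⁻¹ = t • sigmaMinus := by
  ext a b
  fin_cases a <;> fin_cases b <;> simp [particleWeight, sigmaMinus]

theorem particleWeight_conj_sigmaPlus (t : ℂ) :
    particleWeight t * sigmaPlus * particleWeight t⁻¹ = t⁻¹ • sigmaPlus := by
  ext a b
  fin_cases a <;> fin_cases b <;> simp [particleWeight, sigmaPlus]

theorem particleWeight_conj_numOp {t : ℂ} (ht : t ≠ 0) :
    particleWeight t * numOp * particleWeight t⁻¹ = numOp := by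
  ext a b
  fin_cases a <;> fin_cases b <;> simp [particleWeight, numOp, ht]

theorem particleWeight_conj_one_sub_numOp {t : ℂ} (ht : t ≠ 0) :
    particleWeight t * (1 - numOp) * particleWeight t⁻¹ = 1 - numOp := by
  rw [mul_sub, sub_mul, mul_one, particleWeight_mul_inv ht, particleWeight_conj_numOp ht]

theorem Vmat_eq_kronPi (L : ℕ) (τ : ℂ) :
    Vmat L τ = kronPi fun i : Fin L => particleWeight (τ⁻¹ ^ ((i : ℕ) + 1)) := by
  simp only [particleWeight, kronPi_diagonal, Vmat]
  congr 1
  funext η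
  have hexp : ∑ j : Fin L, (((j : ℕ) : ℤ) + 1) * ((η j : ℕ) : ℤ)
      = ((∑ j : Fin L, ((j : ℕ) + 1) * (η j : ℕ) : ℕ) : ℤ) := by
    push_cast; rfl
  rw [hexp, _root_.zpow_neg, zpow_natCast, ← inv_pow, ← Finset.prod_pow_eq_pow_sum]
  simp only [pow_mul]

section Conjugation

variable {L j : ℕ} {τ : ℂ}

def Vunit (L : ℕ) (hτ : τ ≠ 0) : (Matrix (Conf L) (Conf L) ℂ)ˣ where
  val := Vmat L τ
  inv := kronPi fun i : Fin L => particleWeight (τ⁻¹ ^ ((i : ℕ) + 1))⁻¹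
  val_inv := by
    rw [Vmat_eq_kronPi, kronPi_mul, ← kronPi_one]
    exact congrArg kronPi (funext fun i => particleWeight_mul_inv (pow_ne_zero _ (inv_ne_zero hτ)))
  inv_val := by
    rw [Vmat_eq_kronPi, kronPi_mul, ← kronPi_one]
    refine congrArg kronPi (funext fun i => ?_)
    simpa using particleWeight_mul_inv (inv_ne_zero (pow_ne_zero ((i : ℕ) + 1) (inv_ne_zero hτ)))

def conjByV (L : ℕ) (hτ : τ ≠ 0) : Matrix (Conf L) (Conf L) ℂ ≃ₐ[ℂ] Matrix (Conf L) (Conf L) ℂ :=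
  MulSemiringAction.toAlgEquiv ℂ _ (ConjAct.toConjAct (Vunit L hτ))

theorem conjByV_apply (hτ : τ ≠ 0) (X : Matrix (Conf L) (Conf L) ℂ) :
    conjByV L hτ X = Vmat L τ * X * (Vmat L τ)⁻¹ := by
  rw [conjByV, MulSemiringAction.toAlgEquiv_apply, ConjAct.units_smul_def,
    ConjAct.ofConjAct_toConjAct, Matrix.coe_units_inv]
  rfl

theorem conjByV_site (hτ : τ ≠ 0) (h : j < L) (A : Matrix (Fin 2) (Fin 2) ℂ) :
    conjByV L hτ (site L A j)
      = site L (particleWeight (τ⁻¹ ^ (j + 1)) * A * particleWeight (τ⁻¹ ^ (j + 1))⁻¹) j := by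
  rw [conjByV, MulSemiringAction.toAlgEquiv_apply, ConjAct.units_smul_def,
    ConjAct.ofConjAct_toConjAct]
  show Vmat L τ * _ * kronPi _ = _
  rw [Vmat_eq_kronPi]
  exact kronPi_mul_site_mul_kronPi (fun i => particleWeight_mul_inv (by simpa using hτ)) h A

theorem conjByV_sigmaMinus (hτ : τ ≠ 0) (h : j < L) :
    conjByV L hτ (site L sigmaMinus j) = τ⁻¹ ^ (j + 1) • site L sigmaMinus j := by
  rw [conjByV_site hτ h, particleWeight_conj_sigmaMinus, site_smul h]

theorem conjByV_sigmaPlus (hτ : τ ≠ 0) (h : j < L) :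
    conjByV L hτ (site L sigmaPlus j) = τ ^ (j + 1) • site L sigmaPlus j := by
  rw [conjByV_site hτ h, particleWeight_conj_sigmaPlus, site_smul h, inv_pow, inv_inv]

theorem conjByV_numOp (hτ : τ ≠ 0) (h : j < L) :
    conjByV L hτ (site L numOp j) = site L numOp j := by
  rw [conjByV_site hτ h, particleWeight_conj_numOp (by simpa using hτ)]

theorem conjByV_one_sub_numOp (hτ : τ ≠ 0) (h : j < L) :
    conjByV L hτ (site L (1 - numOp) j) = site L (1 - numOp) j := by
  rw [conjByV_site hτ h, particleWeight_conj_one_sub_numOp (by simpa using hτ)]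

theorem conjByV_hopping (hτ : τ ≠ 0) (h : j + 1 < L) :
    conjByV L hτ
        (τ⁻¹ • (site L sigmaMinus j * site L sigmaPlus (j + 1)
            - site L (1 - numOp) j * site L numOp (j + 1))
          + τ • (site L sigmaMinus (j + 1) * site L sigmaPlus j
            - site L numOp j * site L (1 - numOp) (j + 1)))
      = site L sigmaMinus j * site L sigmaPlus (j + 1)
          + site L sigmaPlus j * site L sigmaMinus (j + 1)
          - τ⁻¹ • (site L (1 - numOp) j * site L numOp (j + 1))
          - τ • (site L numOp j * site L (1 - numOp) (j + 1)) := by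
  have hj : j < L := by omega
  simp only [map_add, map_sub, map_smul, map_mul, conjByV_sigmaMinus hτ hj,
    conjByV_sigmaMinus hτ h, conjByV_sigmaPlus hτ hj, conjByV_sigmaPlus hτ h,
    conjByV_numOp hτ hj, conjByV_numOp hτ h, conjByV_one_sub_numOp hτ hj,
    conjByV_one_sub_numOp hτ h, smul_mul_smul_comm, (commute_site h hj (by omega) _ _).eq]
  match_scalars
  · rw [mul_one, ← mul_assoc, ← pow_succ', ← mul_pow, inv_mul_cancel₀ hτ, one_pow]
  · ring
  · rw [mul_one, ← mul_assoc, ← pow_succ', ← mul_pow, mul_inv_cancel₀ hτ, one_pow]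
  · ring

end Conjugation

theorem sigmaMinus_eq_pauli : sigmaMinus = (1 / 2 : ℂ) • sigmaX - (I / 2) • sigmaY := by
  ext a b
  fin_cases a <;> fin_cases b <;> simp [sigmaMinus, sigmaX, sigmaY, div_mul_eq_mul_div] <;> norm_num

theorem sigmaPlus_eq_pauli : sigmaPlus = (1 / 2 : ℂ) • sigmaX + (I / 2) • sigmaY := by
  ext a b
  fin_cases a <;> fin_cases b <;> simp [sigmaPlus, sigmaX, sigmaY, div_mul_eq_mul_div] <;> norm_num

theorem numOp_eq_pauli : numOp = (1 / 2 : ℂ) • (1 - sigmaZ) := by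
  ext a b
  fin_cases a <;> fin_cases b <;> norm_num [numOp, sigmaZ]

theorem one_sub_numOp_eq_pauli : 1 - numOp = (1 / 2 : ℂ) • (1 + sigmaZ) := by
  ext a b
  fin_cases a <;> fin_cases b <;> norm_num [numOp, sigmaZ]

section Pauli

variable {L j : ℕ}

theorem site_sigmaMinus (h : j < L) :
    site L sigmaMinus j = (1 / 2 : ℂ) • site L sigmaX j - (I / 2) • site L sigmaY j := by
  rw [sigmaMinus_eq_pauli, site_sub h, site_smul h, site_smul h]

theorem site_sigmaPlus (h : j < L) :
    site L sigmaPlus j = (1 / 2 : ℂ) • site L sigmaX j + (I / 2) • site L sigmaY j := by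
  rw [sigmaPlus_eq_pauli, site_add h, site_smul h, site_smul h]

theorem site_numOp (h : j < L) : site L numOp j = (1 / 2 : ℂ) • (1 - site L sigmaZ j) := by
  rw [numOp_eq_pauli, site_smul h, site_sub h, site_one h]

theorem site_one_sub_numOp (h : j < L) :
    site L (1 - numOp) j = (1 / 2 : ℂ) • (1 + site L sigmaZ j) := by
  rw [one_sub_numOp_eq_pauli, site_smul h, site_add h, site_one h]

theorem symmHopping_eq_pauli (h : j + 1 < L) (τ : ℂ) :
    site L sigmaMinus j * site L sigmaPlus (j + 1)
        + site L sigmaPlus j * site L sigmaMinus (j + 1)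
        - τ⁻¹ • (site L (1 - numOp) j * site L numOp (j + 1))
        - τ • (site L numOp j * site L (1 - numOp) (j + 1))
      = (1 / 2 : ℂ) • (site L sigmaX j * site L sigmaX (j + 1)
            + site L sigmaY j * site L sigmaY (j + 1)
            + ((τ + τ⁻¹) / 2) • (site L sigmaZ j * site L sigmaZ (j + 1))
            - ((τ + τ⁻¹) / 2) • (1 : Matrix (Conf L) (Conf L) ℂ))
        + (((τ - τ⁻¹) / 4) • site L sigmaZ j - ((τ - τ⁻¹) / 4) • site L sigmaZ (j + 1)) := by
  have hj : j < L := by omega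
  rw [site_sigmaMinus hj, site_sigmaMinus h, site_sigmaPlus hj, site_sigmaPlus h,
    site_numOp hj, site_numOp h, site_one_sub_numOp hj, site_one_sub_numOp h]
  have hI : I / 2 * (I / 2) = -(1 / 4 : ℂ) := by rw [div_mul_div_comm, I_mul_I]; norm_num
  simp only [add_mul, mul_add, sub_mul, mul_sub, smul_mul_smul_comm, one_mul, mul_one, hI]
  module

end Pauli

theorem asep_to_xxz_general (L : ℕ) (hL : 1 ≤ L) (p q α β γ δ : ℝ)
    (hp : 0 < p) (hq : 0 < q)
    (hpq : p * q = 1)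
    (τ : ℂ) (hτ : τ = ((Real.sqrt (p / q) : ℝ) : ℂ)) :
    Vmat L τ * asepGen L p q α β γ δ * (Vmat L τ)⁻¹ =
      (-(1 / 2 : ℂ) * ((Real.sqrt (p * q) : ℝ) : ℂ)) •
        (∑ j ∈ Finset.range (L - 1),
          (site L sigmaX j * site L sigmaX (j + 1)
            + site L sigmaY j * site L sigmaY (j + 1)
            + ((τ + τ⁻¹) / 2) • (site L sigmaZ j * site L sigmaZ (j + 1))
            - ((τ + τ⁻¹) / 2) • (1 : Matrix (Conf L) (Conf L) ℂ)))
      - (((γ : ℂ) * τ + (α : ℂ) * τ⁻¹) / 2) • site L sigmaX 0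
      - (Complex.I * (((γ : ℂ) * τ - (α : ℂ) * τ⁻¹) / 2)) • site L sigmaY 0
      - (((γ : ℂ) - (α : ℂ)) / 2 + (τ - τ⁻¹) / 4) • site L sigmaZ 0
      - (((β : ℂ) * τ ^ L + (δ : ℂ) * τ⁻¹ ^ L) / 2) • site L sigmaX (L - 1)
      - (Complex.I * (((β : ℂ) * τ ^ L - (δ : ℂ) * τ⁻¹ ^ L) / 2)) • site L sigmaY (L - 1)
      - (((β : ℂ) - (δ : ℂ)) / 2 - (τ - τ⁻¹) / 4) • site L sigmaZ (L - 1)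
      + (((α : ℂ) + (β : ℂ) + (γ : ℂ) + (δ : ℂ)) / 2) • (1 : Matrix (Conf L) (Conf L) ℂ) := by
  have hτ0 : τ ≠ 0 := hτ ▸ ofReal_ne_zero.mpr (Real.sqrt_pos.mpr (div_pos hp hq)).ne'
  have hfirst : 0 < L := hL
  have hlast : L - 1 < L := by omega
  have hbulk : ∀ j ∈ Finset.range (L - 1), conjByV L hτ0
      (τ⁻¹ • (site L sigmaMinus j * site L sigmaPlus (j + 1)
          - site L (1 - numOp) j * site L numOp (j + 1))
        + τ • (site L sigmaMinus (j + 1) * site L sigmaPlus j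
          - site L numOp j * site L (1 - numOp) (j + 1))) = _ := fun j hj =>
    have h : j + 1 < L := by rw [Finset.mem_range] at hj; omega
    (conjByV_hopping hτ0 h).trans (symmHopping_eq_pauli h τ)
  rw [← conjByV_apply hτ0, asepGen, ← hτ, hpq, Real.sqrt_one, ofReal_one, map_sub, map_sub,
    map_sub, map_sub, map_smul, map_sum, Finset.sum_congr rfl hbulk, Finset.sum_add_distrib,
    ← Finset.smul_sum, Finset.sum_range_sub']
  simp only [map_smul, map_sub, map_add, map_one, conjByV_sigmaMinus hτ0 hfirst,
    conjByV_sigmaPlus hτ0 hfirst, conjByV_numOp hτ0 hfirst, conjByV_sigmaMinus hτ0 hlast,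
    conjByV_sigmaPlus hτ0 hlast, conjByV_numOp hτ0 hlast]
  simp only [Nat.sub_add_cancel hL, zero_add, pow_one, site_sigmaMinus hfirst,
    site_sigmaPlus hfirst, site_numOp hfirst, site_sigmaMinus hlast, site_sigmaPlus hlast,
    site_numOp hlast]
  module

/-- Assuming `pq = 1`, the ASEP-to-XXZ change of basis:
`V 𝓛 V⁻¹` equals the XXZ-type operator with boundary fields, where
`A₁^± = (γτ ± ατ⁻¹)/2`, `B₁ = (γ−α)/2 + (τ−τ⁻¹)/4`,
`A_L^± = (βτ^L ± δτ^{−L})/2`, `B_L = (β−δ)/2 − (τ−τ⁻¹)/4`. -/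
theorem asep_to_xxz (L : ℕ) (hL : 1 ≤ L) (p q α β γ δ : ℝ)
    (hp : 0 < p) (hq : 0 < q)
    (hα : 0 ≤ α) (hβ : 0 ≤ β) (hγ : 0 ≤ γ) (hδ : 0 ≤ δ)
    (hpq : p * q = 1)
    (τ : ℂ) (hτ : τ = ((Real.sqrt (p / q) : ℝ) : ℂ)) :
    Vmat L τ * asepGen L p q α β γ δ * (Vmat L τ)⁻¹ =
      (-(1 / 2 : ℂ) * ((Real.sqrt (p * q) : ℝ) : ℂ)) •
        (∑ j ∈ Finset.range (L - 1),
          (site L sigmaX j * site L sigmaX (j + 1)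
            + site L sigmaY j * site L sigmaY (j + 1)
            + ((τ + τ⁻¹) / 2) • (site L sigmaZ j * site L sigmaZ (j + 1))
            - ((τ + τ⁻¹) / 2) • (1 : Matrix (Conf L) (Conf L) ℂ)))
      - (((γ : ℂ) * τ + (α : ℂ) * τ⁻¹) / 2) • site L sigmaX 0
      - (Complex.I * (((γ : ℂ) * τ - (α : ℂ) * τ⁻¹) / 2)) • site L sigmaY 0
      - (((γ : ℂ) - (α : ℂ)) / 2 + (τ - τ⁻¹) / 4) • site L sigmaZ 0
      - (((β : ℂ) * τ ^ L + (δ : ℂ) * τ⁻¹ ^ L) / 2) • site L sigmaX (L - 1)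
      - (Complex.I * (((β : ℂ) * τ ^ L - (δ : ℂ) * τ⁻¹ ^ L) / 2)) • site L sigmaY (L - 1)
      - (((β : ℂ) - (δ : ℂ)) / 2 - (τ - τ⁻¹) / 4) • site L sigmaZ (L - 1)
      + (((α : ℂ) + (β : ℂ) + (γ : ℂ) + (δ : ℂ)) / 2) • (1 : Matrix (Conf L) (Conf L) ℂ) :=
  asep_to_xxz_general L hL p q α β γ δ hp hq hpq τ hτ
end
end

section
/- Assume β = δ = 0 and α = γτ². Then V² 𝓛 V⁻² = 𝓛ᵀ, where 𝓛ᵀ denotes the transpose of the matrix 𝓛 (detailed balance). -/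
open Matrix Complex

noncomputable section

/-!
`V²` is diagonal with entries `τ^(-2 w η)`, where `w η = Σ j η_j` is the total particle position.
Every jump operator of `𝓛` moves `w` by a fixed amount, so conjugation by `V²` only rescales it,
and rescales its transpose (the reverse jump) by the inverse factor. The bulk rates `τ⁻¹, τ` and the
boundary rates `α = γ τ²` are exactly the coefficients for which each jump and its reverse
combine to a matrix `M` with `V² M = Mᵀ V²`; the diagonal part of `𝓛` commutes with `V²`.
-/

namespace Matrix

variable {ι K : Type*}

/-- `M` maps each basis vector `e j` into the span of the `e i` with `w i = w j + t`. -/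
def IsHomogeneous [Zero K] (w : ι → ℤ) (t : ℤ) (M : Matrix ι ι K) : Prop :=
  ∀ i j, M i j ≠ 0 → w i = w j + t

theorem IsHomogeneous.mul [Fintype ι] [NonUnitalNonAssocSemiring K] {w : ι → ℤ} {s t : ℤ}
    {M N : Matrix ι ι K} (hM : M.IsHomogeneous w s) (hN : N.IsHomogeneous w t) :
    IsHomogeneous w (s + t) (M * N) := by
  intro i k h
  obtain ⟨j, -, hj⟩ := Finset.exists_ne_zero_of_sum_ne_zero h
  rw [hM i j (left_ne_zero_of_mul hj), hN j k (right_ne_zero_of_mul hj), add_assoc,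
    add_comm t]

theorem IsHomogeneous.diagonal_zpow_mul [Fintype ι] [DecidableEq ι] [Field K] {w : ι → ℤ}
    {t : ℤ} {M : Matrix ι ι K} (h : M.IsHomogeneous w t) {c : K} (hc : c ≠ 0) :
    diagonal (fun i => c ^ w i) * M = c ^ t • (M * diagonal fun i => c ^ w i) := by
  ext i j
  rw [diagonal_mul, smul_apply, mul_diagonal, smul_eq_mul]
  by_cases hM : M i j = 0
  · simp [hM]
  · rw [h i j hM, zpow_add₀ hc]
    ring

variable [Fintype ι]

def detailedBalance [CommSemiring K] (D : Matrix ι ι K) : Submodule K (Matrix ι ι K) where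
  carrier := {M | D * M = Mᵀ * D}
  add_mem' {M N} (hM : D * M = Mᵀ * D) (hN : D * N = Nᵀ * D) := by
    rw [Set.mem_ofPred, Matrix.mul_add, hM, hN, transpose_add, Matrix.add_mul]
  zero_mem' := by simp
  smul_mem' a M (hM : D * M = Mᵀ * D) := by
    rw [Set.mem_ofPred, Matrix.mul_smul, hM, transpose_smul, Matrix.smul_mul]

theorem mem_detailedBalance [CommSemiring K] {D M : Matrix ι ι K} :
    M ∈ detailedBalance D ↔ D * M = Mᵀ * D :=
  Iff.rfl

theorem mul_mul_inv_of_mem_detailedBalance [DecidableEq ι] [CommRing K] {D M : Matrix ι ι K}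
    (hM : M ∈ detailedBalance D) (hD : IsUnit D.det) : D * M * D⁻¹ = Mᵀ := by
  rw [mem_detailedBalance.1 hM, Matrix.mul_assoc, mul_nonsing_inv _ hD, Matrix.mul_one]

variable [DecidableEq ι]

theorem diagonal_mem_detailedBalance [CommSemiring K] (d e : ι → K) :
    diagonal e ∈ detailedBalance (diagonal d) := by
  rw [mem_detailedBalance, diagonal_transpose, diagonal_mul_diagonal, diagonal_mul_diagonal]
  exact congrArg diagonal (funext fun i => mul_comm _ _)

/-- If conjugation by `diagonal d` rescales `X` by `c`, it rescales
`Xᵀ` by `c⁻¹`, so the two rescalings cancel in `a • X + (a * c) • Xᵀ`. -/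
theorem smul_add_smul_transpose_mem_detailedBalance [Field K] {d : ι → K} {c : K} (hc : c ≠ 0)
    {X : Matrix ι ι K} (hX : diagonal d * X = c • (X * diagonal d)) (a : K) :
    a • X + (a * c) • Xᵀ ∈ detailedBalance (diagonal d) := by
  have hXT : diagonal d * Xᵀ = c⁻¹ • (Xᵀ * diagonal d) := by
    have h := congrArg transpose hX
    rw [transpose_mul, transpose_smul, transpose_mul, diagonal_transpose] at h
    rw [h, smul_smul, inv_mul_cancel₀ hc, one_smul]
  rw [mem_detailedBalance, Matrix.mul_add, Matrix.mul_smul, Matrix.mul_smul, hX, hXT,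
    transpose_add, transpose_smul, transpose_smul, transpose_transpose, Matrix.add_mul,
    Matrix.smul_mul, Matrix.smul_mul, smul_smul, smul_smul, mul_assoc, mul_inv_cancel₀ hc,
    mul_one, add_comm]

end Matrix

namespace Asep

variable {L : ℕ}

def posWeight (η : Conf L) : ℤ := ∑ j : Fin L, (((j : ℕ) : ℤ) + 1) * ((η j : ℕ) : ℤ)

theorem posWeight_eq_add_of_eqOn_ne {η' η : Conf L} (j : Fin L)
    (h : ∀ k, k ≠ j → η' k = η k) :
    posWeight η' =
      posWeight η + (((j : ℕ) : ℤ) + 1) * (((η' j : ℕ) : ℤ) - ((η j : ℕ) : ℤ)) := by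
  have hsub : posWeight η' - posWeight η
      = (((j : ℕ) : ℤ) + 1) * (((η' j : ℕ) : ℤ) - ((η j : ℕ) : ℤ)) := by
    rw [posWeight, posWeight, ← Finset.sum_sub_distrib,
      Finset.sum_eq_single j (fun k _ hk => by rw [h k hk, sub_self]) (by simp)]
    ring
  linarith

theorem Vmat_sq (τ : ℂ) :
    Vmat L τ ^ 2 = diagonal fun η => (τ ^ 2)⁻¹ ^ posWeight η := by
  rw [Vmat, sq, diagonal_mul_diagonal]
  exact congrArg diagonal (funext fun η => by rw [posWeight, _root_.inv_zpow', sq, mul_zpow])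

theorem site_apply_of_lt (A : Matrix (Fin 2) (Fin 2) ℂ) {j : ℕ} (hj : j < L) (η' η : Conf L) :
    site L A j η' η =
      if ∀ k, k ≠ (⟨j, hj⟩ : Fin L) → η' k = η k then A (η' ⟨j, hj⟩) (η ⟨j, hj⟩) else 0 := by
  simp only [site, of_apply, dif_pos hj, Finset.prod_boole, Finset.mem_erase, Finset.mem_univ,
    and_true, mul_ite, mul_one, mul_zero]

theorem site_transpose (A : Matrix (Fin 2) (Fin 2) ℂ) (j : ℕ) :
    (site L A j)ᵀ = site L Aᵀ j := by
  ext η' η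
  by_cases hj : j < L
  · simp only [transpose_apply, site_apply_of_lt _ hj, eq_comm]
  · simp only [site, transpose_apply, of_apply, dif_neg hj, eq_comm]

theorem site_diagonal (v : Fin 2 → ℂ) {j : ℕ} (hj : j < L) :
    site L (diagonal v) j = diagonal fun η => v (η ⟨j, hj⟩) := by
  ext η' η
  rw [site_apply_of_lt _ hj]
  by_cases hη : η' = η
  · simp [hη]
  · rw [diagonal_apply_ne _ hη]
    split_ifs with hoff
    · refine diagonal_apply_ne _ fun hjeq => hη (funext fun k => ?_)
      by_cases hk : k = ⟨j, hj⟩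
      · rw [hk, hjeq]
      · exact hoff k hk
    · rfl

theorem isHomogeneous_site_single (a b : Fin 2) (x : ℂ) {j : ℕ} (hj : j < L) :
    IsHomogeneous posWeight (((j : ℤ) + 1) * (((a : ℕ) : ℤ) - ((b : ℕ) : ℤ)))
      (site L (single a b x) j) := by
  intro η' η h
  rw [site_apply_of_lt _ hj] at h
  split_ifs at h with hoff
  · obtain ⟨rfl, rfl⟩ : a = η' ⟨j, hj⟩ ∧ b = η ⟨j, hj⟩ := by
      by_contra hab
      exact h (single_apply_of_ne _ _ _ _ _ hab)
    exact posWeight_eq_add_of_eqOn_ne _ hoff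
  · exact absurd rfl h

theorem sigmaMinus_eq_single : sigmaMinus = single 1 0 1 := by
  ext a b; fin_cases a <;> fin_cases b <;> rfl

theorem sigmaPlus_eq_single : sigmaPlus = single 0 1 1 := by
  ext a b; fin_cases a <;> fin_cases b <;> rfl

theorem numOp_eq_diagonal : numOp = diagonal ![0, 1] := by
  ext a b; fin_cases a <;> fin_cases b <;> rfl

theorem one_sub_numOp_eq_diagonal : 1 - numOp = diagonal ![1, 0] := by
  ext a b; fin_cases a <;> fin_cases b <;> simp [numOp]

theorem isHomogeneous_site_sigmaMinus {j : ℕ} (hj : j < L) :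
    IsHomogeneous posWeight ((j : ℤ) + 1) (site L sigmaMinus j) := by
  simpa [sigmaMinus_eq_single] using isHomogeneous_site_single 1 0 1 hj

theorem isHomogeneous_site_sigmaPlus {j : ℕ} (hj : j < L) :
    IsHomogeneous posWeight (-((j : ℤ) + 1)) (site L sigmaPlus j) := by
  simpa [sigmaPlus_eq_single] using isHomogeneous_site_single 0 1 1 hj

theorem isUnit_det_Vmat_sq {τ : ℂ} (hτ : τ ≠ 0) : IsUnit (Vmat L τ ^ 2).det := by
  rw [Vmat_sq, det_diagonal]
  exact isUnit_iff_ne_zero.2 (Finset.prod_ne_zero_iff.2 fun η _ =>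
    zpow_ne_zero _ (inv_ne_zero (pow_ne_zero 2 hτ)))

theorem site_diagonal_mem_detailedBalance (d : Conf L → ℂ) (v : Fin 2 → ℂ) {j : ℕ}
    (hj : j < L) : site L (diagonal v) j ∈ detailedBalance (diagonal d) := by
  rw [site_diagonal v hj]
  exact diagonal_mem_detailedBalance _ _

theorem site_diagonal_mul_mem_detailedBalance (d : Conf L → ℂ) (v w : Fin 2 → ℂ) {i k : ℕ}
    (hi : i < L) (hk : k < L) :
    site L (diagonal v) i * site L (diagonal w) k ∈ detailedBalance (diagonal d) := by
  rw [site_diagonal v hi, site_diagonal w hk, diagonal_mul_diagonal]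
  exact diagonal_mem_detailedBalance _ _

theorem bulk_mem_detailedBalance {τ : ℂ} (hτ : τ ≠ 0) {j : ℕ} (hj : j + 1 < L) :
    τ⁻¹ • (site L sigmaMinus j * site L sigmaPlus (j + 1)
          - site L (1 - numOp) j * site L numOp (j + 1))
      + τ • (site L sigmaMinus (j + 1) * site L sigmaPlus j
          - site L numOp j * site L (1 - numOp) (j + 1))
      ∈ detailedBalance (Vmat L τ ^ 2) := by
  set X := site L sigmaMinus j * site L sigmaPlus (j + 1)
  have hXT : Xᵀ = site L sigmaMinus (j + 1) * site L sigmaPlus j := by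
    rw [transpose_mul, site_transpose, site_transpose, sigmaMinus_eq_single, sigmaPlus_eq_single,
      transpose_single, transpose_single]
  have hX : IsHomogeneous posWeight (-1) X := by
    have h := (isHomogeneous_site_sigmaMinus (by omega : j < L)).mul
      (isHomogeneous_site_sigmaPlus hj)
    rwa [show (j : ℤ) + 1 + -(((j + 1 : ℕ) : ℤ) + 1) = -1 by push_cast; ring] at h
  have hhop := smul_add_smul_transpose_mem_detailedBalance (pow_ne_zero 2 hτ)
    (by rw [hX.diagonal_zpow_mul (inv_ne_zero (pow_ne_zero 2 hτ)), _root_.zpow_neg_one, inv_inv])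
    τ⁻¹
  rw [show τ⁻¹ * τ ^ 2 = τ by field_simp, hXT] at hhop
  rw [Vmat_sq, smul_sub, smul_sub, sub_add_sub_comm, one_sub_numOp_eq_diagonal,
    numOp_eq_diagonal]
  exact sub_mem hhop (add_mem
    (Submodule.smul_mem _ _ (site_diagonal_mul_mem_detailedBalance _ _ _ (by omega) hj))
    (Submodule.smul_mem _ _ (site_diagonal_mul_mem_detailedBalance _ _ _ (by omega) hj)))

theorem boundary_mem_detailedBalance {τ : ℂ} (hτ : τ ≠ 0) (hL : 0 < L) (γ : ℂ) :
    (γ * τ ^ 2) • (site L sigmaMinus 0 - 1 + site L numOp 0)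
      + γ • (site L sigmaPlus 0 - site L numOp 0) ∈ detailedBalance (Vmat L τ ^ 2) := by
  have hS : IsHomogeneous posWeight 1 (site L sigmaMinus 0) := by
    simpa using isHomogeneous_site_sigmaMinus hL
  have hST : (site L sigmaMinus 0)ᵀ = site L sigmaPlus 0 := by
    rw [site_transpose, sigmaMinus_eq_single, sigmaPlus_eq_single, transpose_single]
  have hflip := smul_add_smul_transpose_mem_detailedBalance (inv_ne_zero (pow_ne_zero 2 hτ))
    (by rw [hS.diagonal_zpow_mul (inv_ne_zero (pow_ne_zero 2 hτ)), zpow_one]) (γ * τ ^ 2)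
  rw [show γ * τ ^ 2 * (τ ^ 2)⁻¹ = γ by field_simp, hST] at hflip
  have hN := site_diagonal_mem_detailedBalance (fun η => (τ ^ 2)⁻¹ ^ posWeight η) ![0, 1] hL
  have h1 := diagonal_mem_detailedBalance (fun η : Conf L => (τ ^ 2)⁻¹ ^ posWeight η) 1
  rw [← numOp_eq_diagonal] at hN
  rw [Pi.one_def, diagonal_one] at h1
  rw [Vmat_sq, show (γ * τ ^ 2) • (site L sigmaMinus 0 - 1 + site L numOp 0)
      + γ • (site L sigmaPlus 0 - site L numOp 0)
      = ((γ * τ ^ 2) • site L sigmaMinus 0 + γ • site L sigmaPlus 0)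
        + ((γ * τ ^ 2 - γ) • site L numOp 0 - (γ * τ ^ 2) • 1) by module]
  exact add_mem hflip (sub_mem (Submodule.smul_mem _ _ hN) (Submodule.smul_mem _ _ h1))

end Asep

theorem detailed_balance_general (L : ℕ) (hL : 1 ≤ L) (p q α β γ δ : ℝ)
    (hp : 0 < p) (hq : 0 < q)
    (hβ0 : β = 0) (hδ0 : δ = 0)
    (τ : ℝ) (hτ : τ = Real.sqrt (p / q))
    (hαγ : α = γ * τ ^ 2) :
    (Vmat L (τ : ℂ)) ^ 2 * asepGen L p q α β γ δ * ((Vmat L (τ : ℂ)) ^ 2)⁻¹ =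
      (asepGen L p q α β γ δ)ᵀ := by
  subst hβ0 hδ0
  have hτ0 : (τ : ℂ) ≠ 0 := by
    rw [hτ]
    exact_mod_cast (Real.sqrt_pos.2 (div_pos hp hq)).ne'
  have hmem : asepGen L p q α 0 γ 0 ∈ detailedBalance (Vmat L τ ^ 2) := by
    rw [asepGen, ← hτ, hαγ]
    simp only [Complex.ofReal_zero, zero_smul, sub_zero, sub_sub]
    refine sub_mem (Submodule.smul_mem _ _ (Submodule.sum_mem _ fun j hj => ?_)) ?_
    · exact Asep.bulk_mem_detailedBalance hτ0 (by have := Finset.mem_range.1 hj; omega)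
    · push_cast
      exact Asep.boundary_mem_detailedBalance hτ0 hL γ
  exact mul_mul_inv_of_mem_detailedBalance hmem (Asep.isUnit_det_Vmat_sq hτ0)

/-- **detailed balance.**  With `β = δ = 0` and `α = γτ²`,
conjugation by `V²` yields the transpose: `V² 𝓛 V⁻² = 𝓛ᵀ`. -/
theorem detailed_balance (L : ℕ) (hL : 1 ≤ L) (p q α β γ δ : ℝ)
    (hp : 0 < p) (hq : 0 < q)
    (hα : 0 ≤ α) (hβ : 0 ≤ β) (hγ : 0 ≤ γ) (hδ : 0 ≤ δ)
    (hβ0 : β = 0) (hδ0 : δ = 0)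
    (τ : ℝ) (hτ : τ = Real.sqrt (p / q))
    (hαγ : α = γ * τ ^ 2) :
    (Vmat L (τ : ℂ)) ^ 2 * asepGen L p q α β γ δ * ((Vmat L (τ : ℂ)) ^ 2)⁻¹ =
      (asepGen L p q α β γ δ)ᵀ :=
  detailed_balance_general L hL p q α β γ δ hp hq hβ0 hδ0 τ hτ hαγ
end
end

section
/- Let n ≥ 1 and let L, S, V be n×n complex matrices with V invertible. If (V L V⁻¹) S = S (V L V⁻¹) and V² L V⁻² = Lᵀ, then Lᵀ (V S V) = (V S V) L. -/
open Matrix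

/-- **abstract duality mechanism, Carinci–Giardinà–Redig–Sasamoto.**
If `S` commutes with `V L V⁻¹` and `V² L V⁻² = Lᵀ`, then `Lᵀ (V S V) = (V S V) L`. -/
theorem abstract_duality (n : ℕ) (hn : 1 ≤ n)
    (L S V : Matrix (Fin n) (Fin n) ℂ) (hV : IsUnit V)
    (hcomm : (V * L * V⁻¹) * S = S * (V * L * V⁻¹))
    (hdb : V ^ 2 * L * (V ^ 2)⁻¹ = Lᵀ) :
    Lᵀ * (V * S * V) = (V * S * V) * L := by
  have hdet : IsUnit V.det := (Matrix.isUnit_iff_isUnit_det V).mp hV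
  have hVi : V⁻¹ * V = 1 := Matrix.nonsing_inv_mul V hdet
  have hsq : (V ^ 2)⁻¹ = V⁻¹ * V⁻¹ := by
    rw [sq, Matrix.mul_inv_rev]
  calc Lᵀ * (V * S * V) = V ^ 2 * L * (V ^ 2)⁻¹ * (V * S * V) := by rw [hdb]
    _ = V * (V * L * V⁻¹ * S) * V := by
        rw [hsq, sq]
        calc V * V * L * (V⁻¹ * V⁻¹) * (V * S * V)
            = V * (V * L * V⁻¹) * (V⁻¹ * V) * S * V := by
              simp only [Matrix.mul_assoc]
          _ = V * (V * L * V⁻¹ * S) * V := by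
              rw [hVi]; simp only [Matrix.mul_one, Matrix.mul_assoc]
    _ = V * (S * (V * L * V⁻¹)) * V := by rw [hcomm]
    _ = V * S * V * L * (V⁻¹ * V) := by simp only [Matrix.mul_assoc]
    _ = (V * S * V) * L := by rw [hVi, Matrix.mul_one]
end

section
/- Let p, q > 0 be real, τ := √(p/q), and let α, γ ≥ 0 satisfy α = γτ². Let M := [[τ⁻¹−1, 1],[1, τ−1]]. Then for every integer N ≥ 0, −γ (M^N)₁₂ τ⁻¹ + γ (M^N)₁₁ = −α (M^N)₂₁ τ⁻¹ + α (M^N)₂₂ τ⁻², and both sides equal (−1)^N γ. -/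
open Matrix

/-- **duality check at `L = 1`.**  With `τ = √(p/q)` and `α = γτ²`,
for `M = [[τ⁻¹−1, 1],[1, τ−1]]` and every `N ≥ 0`,
`−γ (M^N)₁₂ τ⁻¹ + γ (M^N)₁₁ = −α (M^N)₂₁ τ⁻¹ + α (M^N)₂₂ τ⁻²`, both sides being
`(−1)^N γ`. -/
theorem duality_check_L1 (p q α γ : ℝ) (hp : 0 < p) (hq : 0 < q)
    (hα : 0 ≤ α) (hγ : 0 ≤ γ)
    (τ : ℝ) (hτ : τ = Real.sqrt (p / q))
    (hαγ : α = γ * τ ^ 2)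
    (M : Matrix (Fin 2) (Fin 2) ℂ)
    (hM : M = !![(τ : ℂ)⁻¹ - 1, 1; 1, (τ : ℂ) - 1]) :
    ∀ N : ℕ,
      (-(γ : ℂ) * (M ^ N) 0 1 * (τ : ℂ)⁻¹ + (γ : ℂ) * (M ^ N) 0 0 =
          -(α : ℂ) * (M ^ N) 1 0 * (τ : ℂ)⁻¹ + (α : ℂ) * (M ^ N) 1 1 * ((τ : ℂ)⁻¹) ^ 2) ∧
        -(γ : ℂ) * (M ^ N) 0 1 * (τ : ℂ)⁻¹ + (γ : ℂ) * (M ^ N) 0 0 =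
          (-1 : ℂ) ^ N * (γ : ℂ) := by
  subst hM
  have hτpos : 0 < τ := hτ ▸ Real.sqrt_pos.mpr (div_pos hp hq)
  have hτ0 : (τ : ℂ) ≠ 0 := by exact_mod_cast hτpos.ne'
  have huτ : (τ : ℂ) * (τ : ℂ)⁻¹ = 1 := mul_inv_cancel₀ hτ0
  have hα' : (α : ℂ) = (γ : ℂ) * (τ : ℂ) ^ 2 := by exact_mod_cast hαγ
  set A : Matrix (Fin 2) (Fin 2) ℂ := !![(τ : ℂ)⁻¹ - 1, 1; 1, (τ : ℂ) - 1] with hA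
  suffices h : ∀ N : ℕ,
      (-(γ : ℂ) * (A ^ N) 0 1 * (τ : ℂ)⁻¹ + (γ : ℂ) * (A ^ N) 0 0 =
        (-1 : ℂ) ^ N * (γ : ℂ)) ∧
      (-(α : ℂ) * (A ^ N) 1 0 * (τ : ℂ)⁻¹ + (α : ℂ) * (A ^ N) 1 1 * ((τ : ℂ)⁻¹) ^ 2 =
        (-1 : ℂ) ^ N * (γ : ℂ)) by
    intro N
    exact ⟨(h N).1.trans (h N).2.symm, (h N).1⟩
  intro N
  induction N with
  | zero =>
      simp only [pow_zero, Matrix.one_apply_ne, Matrix.one_apply_eq]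
      refine ⟨by simp, ?_⟩
      simp only [Matrix.one_apply]
      norm_num
      rw [hα']
      field_simp
  | succ n ih =>
      obtain ⟨ih1, ih2⟩ := ih
      have e00 : A 0 0 = (τ : ℂ)⁻¹ - 1 := by simp [hA]
      have e01 : A 0 1 = 1 := by simp [hA]
      have e10 : A 1 0 = 1 := by simp [hA]
      have e11 : A 1 1 = (τ : ℂ) - 1 := by simp [hA]
      simp only [pow_succ, Matrix.mul_apply, Fin.sum_univ_two, e00, e01, e10, e11]
      constructor
      · linear_combination (-1 : ℂ) * ih1 - γ * ((A ^ n) 0 1) * huτ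
      · linear_combination (-1 : ℂ) * ih2 + α * ((A ^ n) 1 1) * (τ : ℂ)⁻¹ * huτ
end
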